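/- Let f ∈ C³(𝕋) and g ∈ C²(𝕋) be real-valued. Then the sesquilinear form G_+(φ,ψ) = ⟨φ, X H_f* H_g X ψ⟩ defined on the span of the canonical basis of ℓ²(ℕ) is continuous for the topology induced by ℓ²(ℕ) × ℓ²(ℕ), hence the operator X H_f* H_g X extends to a bounded operator on ℓ²(ℕ). -/

import Mathlib

open scoped InnerProductSpace
open Complex

noncomputable section

/-- The `n`-th Fourier coefficient of a `2π`-periodic function `f : ℝ → ℂ`. -/
def fcoef (f : ℝ → ℂ) (n : ℤ) : ℂ :=
  (1 / (2 * Real.pi)) • ∫ θ in (0:ℝ)..(2 * Real.pi), Complex.exp (-Complex.I * n * θ) * f θ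

variable {E : Type*} [NormedAddCommGroup E] [InnerProductSpace ℂ E] [CompleteSpace E]

/-- `e` is the canonical orthonormal (Hilbert) basis of `ℓ²(ℕ)`, abstractly:
an orthonormal family with dense span. -/
def IsONBasis (e : ℕ → E) : Prop :=
  Orthonormal ℂ e ∧ (Submodule.span ℂ (Set.range e)).topologicalClosure = ⊤

/-- `T` is the Toeplitz operator with symbol `f`: `⟪e n, T (e k)⟫ = f̂(n−k)`. -/
def IsToeplitz (e : ℕ → E) (f : ℝ → ℂ) (T : E →L[ℂ] E) : Prop :=
  ∀ n k : ℕ, ⟪e n, T (e k)⟫_ℂ = fcoef f ((n : ℤ) - k)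

/-- `T` is the Hankel operator with symbol `f`: `⟪e n, T (e k)⟫ = f̂(n+k+1)`
(0-based indexing of the paper's `f̂_{n+k-1}`, `n, k ≥ 1`). -/
def IsHankel (e : ℕ → E) (f : ℝ → ℂ) (T : E →L[ℂ] E) : Prop :=
  ∀ n k : ℕ, ⟪e n, T (e k)⟫_ℂ = fcoef f ((n : ℤ) + k + 1)

/-- `X` is the (self-adjoint) position operator: `X e_n = (n+1) e_n` (0-based). -/
def IsPosOp (e : ℕ → E) (X : E →ₗ.[ℂ] E) : Prop :=
  X.adjoint = X ∧ ∀ q : ℕ, ∃ hq : e q ∈ X.domain, X ⟨e q, hq⟩ = ((q : ℂ) + 1) • e q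

/-- `A` is the self-adjoint operator `A_g`, the closure of `½(T_g X + X T_g)`;
being essentially self-adjoint, it is the unique self-adjoint operator with
matrix elements `((p+q+2)/2)·ĝ(p−q)` on the canonical basis (0-based). -/
def IsAg (e : ℕ → E) (g : ℝ → ℂ) (A : E →ₗ.[ℂ] E) : Prop :=
  A.adjoint = A ∧ ∀ q : ℕ, ∃ hq : e q ∈ A.domain, ∀ p : ℕ,
    ⟪e p, A ⟨e q, hq⟩⟫_ℂ = (((p : ℂ) + q + 2) / 2) * fcoef g ((p : ℤ) - q)

/-- `C = ad_A B`: the commutator form of `A` and `B` on `D(A) × D(A)` is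
represented by the bounded operator `C`; in particular `B ∈ C¹(A)`. -/
def CommutatorOf (A : E →ₗ.[ℂ] E) (B C : E →L[ℂ] E) : Prop :=
  ∀ φ ψ : A.domain, ⟪A φ, B (ψ : E)⟫_ℂ - ⟪(φ : E), B (A ψ)⟫_ℂ = ⟪(φ : E), C (ψ : E)⟫_ℂ

/-! By Parseval, `⟪e p, X H_f* H_g X e q⟫ = ∑ₙ ⟪e p, u n⟫ ⟪w n, e q⟫`, where `u n` and `w n`
are the (conjugated) `n`-th rows of `H_f X` and `H_g X`, with coordinates of modulus
`(p + 1) |f̂(n + p + 1)|` and `(q + 1) |ĝ(n + q + 1)|`. Integrating by parts, `|f̂ m| ≲ m⁻³`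
and `|ĝ m| ≲ m⁻²`, so `‖u n‖² ≲ ∑ₚ (n + p + 1)⁻⁴ ≲ (n + 1)⁻³` and
`‖w n‖² ≲ ∑_q (n + q + 1)⁻² ≲ (n + 1)⁻¹`. Hence `∑ₙ ‖u n‖ ‖w n‖ < ∞`, and the rank-one operators
`|u n⟩⟨w n|` sum in operator norm to the bounded extension. -/

lemma fcoef_eq_fourierCoeffOn (F : ℝ → ℂ) (n : ℤ) :
    fcoef F n = fourierCoeffOn Real.two_pi_pos F n := by
  rw [fourierCoeffOn_eq_integral, fcoef, sub_zero]
  congr 1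
  refine intervalIntegral.integral_congr fun x _ => ?_
  rw [fourier_coe_apply, smul_eq_mul]
  congr 2
  push_cast
  field_simp

lemma Function.Periodic.deriv {G : Type*} [NormedAddCommGroup G] [NormedSpace ℝ G] {F : ℝ → G}
    {T : ℝ} (h : Function.Periodic F T) :
    Function.Periodic (deriv F) T := fun x => by
  rw [← deriv_comp_add_const, funext h]

lemma fcoef_deriv_of_ne_zero {F : ℝ → ℂ} (hF : ContDiff ℝ 1 F)
    (hper : Function.Periodic F (2 * Real.pi)) {m : ℤ} (hm : m ≠ 0) :
    fcoef (deriv F) m = I * m * fcoef F m := by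
  have hd : Differentiable ℝ F := hF.differentiable one_ne_zero
  rw [fcoef_eq_fourierCoeffOn, fcoef_eq_fourierCoeffOn,
    fourierCoeffOn_of_hasDerivAt Real.two_pi_pos hm (fun x _ => (hd x).hasDerivAt)
      ((hF.continuous_deriv le_rfl).intervalIntegrable _ _)]
  have hF2pi : F (2 * Real.pi) = F 0 := by simpa using hper 0
  have hm' : (m : ℂ) ≠ 0 := by exact_mod_cast hm
  rw [hF2pi, sub_self, mul_zero, zero_sub]
  push_cast [sub_zero]
  field_simp

lemma norm_fcoef_le {F : ℝ → ℂ} {C : ℝ} (hC : ∀ x ∈ Set.uIoc 0 (2 * Real.pi), ‖F x‖ ≤ C)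
    (m : ℤ) : ‖fcoef F m‖ ≤ C := by
  have hint : ‖∫ θ in (0 : ℝ)..2 * Real.pi, exp (-I * m * θ) * F θ‖ ≤ C * |2 * Real.pi - 0| :=
    intervalIntegral.norm_integral_le_of_norm_le_const fun x hx => by
      simpa [norm_exp] using hC x hx
  rw [sub_zero, abs_of_pos Real.two_pi_pos] at hint
  rw [fcoef, norm_smul, Real.norm_of_nonneg (by positivity)]
  calc 1 / (2 * Real.pi) * ‖∫ θ in (0 : ℝ)..2 * Real.pi, exp (-I * m * θ) * F θ‖
      ≤ 1 / (2 * Real.pi) * (C * (2 * Real.pi)) := by gcongr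
    _ = C := by field_simp

lemma exists_norm_fcoef_le {F : ℝ → ℂ} (hF : Continuous F) : ∃ C, ∀ m : ℤ, ‖fcoef F m‖ ≤ C := by
  obtain ⟨C, hC⟩ := (isCompact_uIcc (a := 0) (b := 2 * Real.pi)).exists_bound_of_continuousOn
    hF.continuousOn
  exact ⟨C, norm_fcoef_le fun x hx => hC x (Set.uIoc_subset_uIcc hx)⟩

lemma exists_norm_fcoef_mul_pow_le (k : ℕ) {F : ℝ → ℂ} (hF : ContDiff ℝ k F)
    (hper : Function.Periodic F (2 * Real.pi)) :
    ∃ C, ∀ m : ℤ, ‖fcoef F m‖ * |(m : ℝ)| ^ k ≤ C := by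
  induction k generalizing F with
  | zero => simpa using exists_norm_fcoef_le hF.continuous
  | succ k ih =>
    have hF' := contDiff_succ_iff_deriv.mp (by exact_mod_cast hF : ContDiff ℝ (k + 1) F)
    obtain ⟨C, hC⟩ := ih hF'.2.2 hper.deriv
    refine ⟨C, fun m => ?_⟩
    rcases eq_or_ne m 0 with rfl | hm
    · have hC0 : 0 ≤ C := (mul_nonneg (norm_nonneg _) (by positivity)).trans (hC 1)
      simpa using hC0
    calc ‖fcoef F m‖ * |(m : ℝ)| ^ (k + 1) = ‖fcoef (deriv F) m‖ * |(m : ℝ)| ^ k := by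
          rw [fcoef_deriv_of_ne_zero (hF.of_le (by exact_mod_cast le_add_self)) hper hm,
            norm_mul, norm_mul, norm_I, one_mul, norm_intCast, pow_succ]
          ring
      _ ≤ C := hC m

lemma succ_mul_norm_fcoef_le {F : ℝ → ℂ} {C : ℝ} {k : ℕ}
    (hC : ∀ m : ℤ, ‖fcoef F m‖ * |(m : ℝ)| ^ (k + 1) ≤ C) (n p : ℕ) :
    ((p : ℝ) + 1) * ‖fcoef F (n + p + 1)‖ ≤ C / ((n : ℝ) + p + 1) ^ k := by
  have hx : (0 : ℝ) < n + p + 1 := by positivity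
  have h := hC (n + p + 1)
  push_cast at h
  rw [le_div_iff₀ (pow_pos hx k)]
  calc ((p : ℝ) + 1) * ‖fcoef F (n + p + 1)‖ * ((n : ℝ) + p + 1) ^ k
      ≤ ((n : ℝ) + p + 1) * ‖fcoef F (n + p + 1)‖ * ((n : ℝ) + p + 1) ^ k := by
        gcongr
        linarith [(n.cast_nonneg : (0 : ℝ) ≤ n)]
    _ = ‖fcoef F (n + p + 1)‖ * |(n : ℝ) + p + 1| ^ (k + 1) := by
        rw [abs_of_pos hx]
        ring
    _ ≤ C := h

lemma sum_range_one_div_add_sq_le (n N : ℕ) :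
    ∑ q ∈ Finset.range N, 1 / ((n : ℝ) + q + 1) ^ 2 ≤ 2 / ((n : ℝ) + 1) :=
  calc ∑ q ∈ Finset.range N, 1 / ((n : ℝ) + q + 1) ^ 2
      = ∑ i ∈ Finset.Ioo n (N + (n + 1)), ((i : ℝ) ^ 2)⁻¹ := by
        rw [← Finset.Ico_add_one_left_eq_Ioo, Finset.sum_Ico_eq_sum_range, Nat.add_sub_cancel]
        refine Finset.sum_congr rfl fun q _ => ?_
        push_cast
        ring
    _ ≤ 2 / (n + 1) := sum_Ioo_inv_sq_le _ _

lemma summable_one_div_add_sq (n : ℕ) : Summable fun q : ℕ => 1 / ((n : ℝ) + q + 1) ^ 2 :=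
  summable_of_sum_range_le (fun _ => by positivity) (sum_range_one_div_add_sq_le n)

lemma tsum_one_div_add_sq_le (n : ℕ) : ∑' q : ℕ, 1 / ((n : ℝ) + q + 1) ^ 2 ≤ 2 / ((n : ℝ) + 1) :=
  Real.tsum_le_of_sum_range_le (fun _ => by positivity) (sum_range_one_div_add_sq_le n)

section
variable {𝕜 V : Type*} [RCLike 𝕜] [NormedAddCommGroup V] [InnerProductSpace 𝕜 V]

lemma HilbertBasis.exists_inner_eq {ι : Type*} (b : HilbertBasis ι 𝕜 V) {c : ι → 𝕜}
    (hc : Summable fun i => ‖c i‖ ^ 2) :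
    ∃ v : V, (∀ i, ⟪b i, v⟫_𝕜 = c i) ∧ ‖v‖ ^ 2 = ∑' i, ‖c i‖ ^ 2 := by
  have hmem : Memℓp c 2 := memℓp_gen (by simpa using hc)
  refine ⟨b.repr.symm ⟨c, hmem⟩, fun i => ?_, ?_⟩
  · rw [← b.repr_apply_apply, LinearIsometryEquiv.apply_symm_apply]
  · rw [LinearIsometryEquiv.norm_map]
    simpa using lp.norm_rpow_eq_tsum (p := 2) (by simp) ⟨c, hmem⟩

lemma HilbertBasis.exists_inner_eq_of_norm_le (b : HilbertBasis ℕ 𝕜 V) {c : ℕ → 𝕜} {C : ℝ}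
    {n k : ℕ} (hc : ∀ p, ‖c p‖ ≤ C / ((n : ℝ) + p + 1) ^ (k + 1)) :
    ∃ v : V, (∀ p, ⟪b p, v⟫_𝕜 = c p) ∧ ‖v‖ ^ 2 ≤ 2 * C ^ 2 / ((n : ℝ) + 1) ^ (2 * k + 1) := by
  set D := C ^ 2 / ((n : ℝ) + 1) ^ (2 * k)
  have hsq : ∀ p : ℕ, ‖c p‖ ^ 2 ≤ D * (1 / ((n : ℝ) + p + 1) ^ 2) := fun p =>
    calc ‖c p‖ ^ 2 ≤ (C / ((n : ℝ) + p + 1) ^ (k + 1)) ^ 2 :=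
          pow_le_pow_left₀ (norm_nonneg _) (hc p) 2
      _ = C ^ 2 / (((n : ℝ) + p + 1) ^ k) ^ 2 * (1 / ((n : ℝ) + p + 1) ^ 2) := by
          field_simp
          ring
      _ ≤ C ^ 2 / (((n : ℝ) + 1) ^ k) ^ 2 * (1 / ((n : ℝ) + p + 1) ^ 2) := by
          gcongr
          linarith [(p.cast_nonneg : (0 : ℝ) ≤ p)]
      _ = D * (1 / ((n : ℝ) + p + 1) ^ 2) := by ring
  have hsum := (summable_one_div_add_sq n).mul_left D
  obtain ⟨v, hv, hnorm⟩ := b.exists_inner_eq (hsum.of_nonneg_of_le (fun _ => by positivity) hsq)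
  refine ⟨v, hv, ?_⟩
  calc ‖v‖ ^ 2 ≤ ∑' p : ℕ, D * (1 / ((n : ℝ) + p + 1) ^ 2) :=
        hnorm ▸ Summable.tsum_le_tsum hsq (hsum.of_nonneg_of_le (fun _ => by positivity) hsq) hsum
    _ ≤ D * (2 / ((n : ℝ) + 1)) := by
        rw [tsum_mul_left]
        gcongr
        exact tsum_one_div_add_sq_le n
    _ = 2 * C ^ 2 / ((n : ℝ) + 1) ^ (2 * k + 1) := by
        simp only [D, pow_succ]
        field_simp

variable [CompleteSpace V]

lemma exists_inner_eq_tsum_inner_mul_inner {ι : Type*} {u w : ι → V}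
    (h : Summable fun n => ‖u n‖ * ‖w n‖) :
    ∃ B : V →L[𝕜] V, ∀ x y, ⟪x, B y⟫_𝕜 = ∑' n, ⟪x, u n⟫_𝕜 * ⟪w n, y⟫_𝕜 := by
  let R : ι → V →L[𝕜] V := fun n => (innerSL 𝕜 (w n)).smulRight (u n)
  have hR : Summable R := by
    refine h.of_norm_bounded fun n => ?_
    rw [ContinuousLinearMap.norm_smulRight_apply, innerSL_apply_norm, mul_comm]
  refine ⟨∑' n, R n, fun x y => ?_⟩
  have hsum : HasSum (fun n => ⟪x, R n y⟫_𝕜) ⟪x, (∑' n, R n) y⟫_𝕜 :=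
    (hR.hasSum.mapL (ContinuousLinearMap.apply 𝕜 V y)).mapL (innerSL 𝕜 x)
  rw [← hsum.tsum_eq]
  simp [R, inner_smul_right, mul_comm]

lemma exists_inner_eq_succ_mul_succ_mul_inner_adjoint (b : HilbertBasis ℕ 𝕜 V)
    (S T : V →L[𝕜] V) {Cs Ct : ℝ}
    (hS : ∀ n p : ℕ, ((p : ℝ) + 1) * ‖⟪b n, S (b p)⟫_𝕜‖ ≤ Cs / ((n : ℝ) + p + 1) ^ 2)
    (hT : ∀ n q : ℕ, ((q : ℝ) + 1) * ‖⟪b n, T (b q)⟫_𝕜‖ ≤ Ct / ((n : ℝ) + q + 1)) :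
    ∃ B : V →L[𝕜] V, ∀ p q : ℕ,
      ⟪b p, B (b q)⟫_𝕜 = ((p : 𝕜) + 1) * ((q : 𝕜) + 1) * ⟪b p, S.adjoint (T (b q))⟫_𝕜 := by
  have hweight : ∀ p : ℕ, ‖(p : 𝕜) + 1‖ = (p : ℝ) + 1 := fun p => by
    exact_mod_cast RCLike.norm_natCast (K := 𝕜) (p + 1)
  choose u hu hu_norm using fun n => b.exists_inner_eq_of_norm_le (n := n) (k := 1)
    (c := fun p => ((p : 𝕜) + 1) * ⟪S (b p), b n⟫_𝕜) fun p => by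
      simpa [hweight, norm_inner_symm] using hS n p
  choose w hw hw_norm using fun n => b.exists_inner_eq_of_norm_le (n := n) (k := 0)
    (c := fun q => starRingEnd 𝕜 (((q : 𝕜) + 1) * ⟪b n, T (b q)⟫_𝕜)) fun q => by
      simpa [hweight, norm_inner_symm] using hT n q
  have hsum : Summable fun n => ‖u n‖ * ‖w n‖ := by
    refine ((summable_one_div_add_sq 0).mul_left (2 * Cs * Ct)).abs.of_norm_bounded fun n => ?_
    rw [Real.norm_eq_abs, ← sq_le_sq]
    calc (‖u n‖ * ‖w n‖) ^ 2 = ‖u n‖ ^ 2 * ‖w n‖ ^ 2 := mul_pow _ _ _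
      _ ≤ 2 * Cs ^ 2 / ((n : ℝ) + 1) ^ (2 * 1 + 1) * (2 * Ct ^ 2 / ((n : ℝ) + 1) ^ (2 * 0 + 1)) :=
        mul_le_mul (hu_norm n) (hw_norm n) (by positivity) (by positivity)
      _ = (2 * Cs * Ct * (1 / (((0 : ℕ) : ℝ) + n + 1) ^ 2)) ^ 2 := by
        push_cast
        field_simp
        ring
  obtain ⟨B, hB⟩ := exists_inner_eq_tsum_inner_mul_inner (𝕜 := 𝕜) hsum
  refine ⟨B, fun p q => ?_⟩
  rw [hB, S.adjoint_inner_right, ← b.tsum_inner_mul_inner, ← tsum_mul_left]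
  refine tsum_congr fun n => ?_
  rw [hu, ← inner_conj_symm (w n), hw, RCLike.conj_conj]
  ring

end

theorem stmt_7 (e : ℕ → E) (he : IsONBasis e)
    (f g : ℝ → ℝ) (hf : ContDiff ℝ 3 f) (hg : ContDiff ℝ 2 g)
    (hfp : Function.Periodic f (2 * Real.pi)) (hgp : Function.Periodic g (2 * Real.pi))
    (Hf Hg : E →L[ℂ] E)
    (hHf : IsHankel e (fun x => Complex.ofReal (f x)) Hf)
    (hHg : IsHankel e (fun x => Complex.ofReal (g x)) Hg) :
    ∃ B : E →L[ℂ] E, ∀ p q : ℕ,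
      ⟪e p, B (e q)⟫_ℂ =
        ((p : ℂ) + 1) * ((q : ℂ) + 1) *
          ⟪e p, (ContinuousLinearMap.adjoint Hf) (Hg (e q))⟫_ℂ := by
  let b : HilbertBasis ℕ ℂ E := HilbertBasis.mk he.1 he.2.ge
  have hb : ⇑b = e := HilbertBasis.coe_mk _ _
  obtain ⟨Cf, hCf⟩ := exists_norm_fcoef_mul_pow_le 3 (F := fun x => f x)
    (ofRealCLM.contDiff.comp hf) fun x => by simp [hfp x]
  obtain ⟨Cg, hCg⟩ := exists_norm_fcoef_mul_pow_le 2 (F := fun x => g x)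
    (ofRealCLM.contDiff.comp hg) fun x => by simp [hgp x]
  obtain ⟨B, hB⟩ := exists_inner_eq_succ_mul_succ_mul_inner_adjoint b Hf Hg
    (fun n p => by simpa only [hb, hHf n p] using succ_mul_norm_fcoef_le hCf n p)
    (fun n q => by simpa only [hb, hHg n q, pow_one] using succ_mul_norm_fcoef_le hCg n q)
  exact ⟨B, by simpa only [hb] using hB⟩
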